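/- Let f ∈ L²(ℝ³; |v·n| dv restricted to v·n>0) and 0 < α ≤ 1. Define the boundary trace γf on the full boundary phase space by γ₊f = f on {v·n>0} and γ₋f = (1−α)f(Rv) + α P_γ f on {v·n<0}, where Rv = v − 2(v·n)n and P_γ f(v) = √(2πμ(v))∫_{v'·n>0}(v'·n)f(v')√(μ(v'))dv'. Then (1/2)∫_{ℝ³}(v·n)|γf(v)|² dv = ((2−α)α/2) ∫_{v·n>0}(v·n)|(I − P_γ)f(v)|² dv. -/

import Mathlib

open MeasureTheory Real
open scoped InnerProductSpace

noncomputable def Maxwellian (v : EuclideanSpace ℝ (Fin 3)) : ℝ :=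
  (2 * π) ^ (-(3 : ℝ) / 2) * Real.exp (-‖v‖ ^ 2 / 2)

/-- The diffuse boundary projection P_γ. -/
noncomputable def Pgamma (n : EuclideanSpace ℝ (Fin 3))
    (f : EuclideanSpace ℝ (Fin 3) → ℝ) (v : EuclideanSpace ℝ (Fin 3)) : ℝ :=
  Real.sqrt (2 * π * Maxwellian v) *
    ∫ w in {w : EuclideanSpace ℝ (Fin 3) | 0 < ⟪w, n⟫_ℝ},
      ⟪w, n⟫_ℝ * f w * Real.sqrt (Maxwellian w)

/-- The full Maxwell boundary trace: f itself on the outgoing set, and the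
Maxwell reflection (1−α)f(Rv) + α P_γ f on the incoming set. -/
noncomputable def boundaryTrace (n : EuclideanSpace ℝ (Fin 3)) (α : ℝ)
    (f : EuclideanSpace ℝ (Fin 3) → ℝ) (v : EuclideanSpace ℝ (Fin 3)) : ℝ :=
  if 0 < ⟪v, n⟫_ℝ then f v
  else (1 - α) * f (v - (2 * ⟪v, n⟫_ℝ) • n) + α * Pgamma n f v

/-!
On the outgoing half-space `P_γ f = √(2π) c √μ` with `c = ∫_{v·n>0} (v·n) f √μ`, and the
normalisation `∫_{v·n>0} (v·n) μ = (2π)^{-1/2}` (rotate `n` to `e₀` and factor the Gaussian)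
makes `P_γ` an orthogonal projection for the weight `(v·n) dv`:
`p := ∫_{v·n>0} (v·n) (P_γ f)² = ∫_{v·n>0} (v·n) f P_γ f`.
As `P_γ f` is radial, the incoming trace is `g ∘ R` with `g = (1-α) f + α P_γ f`. The reflection
`R` preserves Lebesgue measure, reverses `v·n` and swaps the half-spaces up to a null hyperplane,
so the incoming part of `∫ (v·n) |γf|²` is `-∫_{v·n>0} (v·n) g²`. With `A = ∫_{v·n>0} (v·n) f²`
everything is a quadratic form in `(A, p)`: `A - (1-α)² A - (2α - α²) p = (2 - α) α (A - p)`.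
-/

section SpecularReflection

variable {E : Type*} [NormedAddCommGroup E] [InnerProductSpace ℝ E]

noncomputable def specularReflection (n : E) : E ≃ₗᵢ[ℝ] E := (ℝ ∙ n)ᗮ.reflection

theorem specularReflection_apply {n : E} (hn : ‖n‖ = 1) (v : E) :
    specularReflection n v = v - (2 * ⟪v, n⟫_ℝ) • n := by
  rw [specularReflection, Submodule.reflection_orthogonal_apply,
    Submodule.reflection_singleton_apply, hn, real_inner_comm]
  module

theorem inner_specularReflection (n v : E) :
    ⟪specularReflection n v, n⟫_ℝ = -⟪v, n⟫_ℝ := by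
  rw [← (specularReflection n).inner_map_map, specularReflection,
    Submodule.reflection_reflection, Submodule.reflection_orthogonalComplement_singleton_eq_neg,
    inner_neg_right]

variable [MeasurableSpace E] [BorelSpace E] [FiniteDimensional ℝ E]

theorem volume_setOf_inner_eq_zero {n : E} (hn : n ≠ 0) :
    volume {v : E | ⟪v, n⟫_ℝ = 0} = 0 := by
  have hker : {v : E | ⟪v, n⟫_ℝ = 0} = ((ℝ ∙ n)ᗮ : Submodule ℝ E) := by
    ext v
    simp [Submodule.mem_orthogonal_singleton_iff_inner_left]
  rw [hker]
  refine Measure.addHaar_submodule _ _ fun htop => hn ?_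
  have hmem : n ∈ (ℝ ∙ n)ᗮ := htop ▸ Submodule.mem_top
  simpa [Submodule.mem_orthogonal_singleton_iff_inner_left] using hmem

theorem setOf_inner_nonneg_ae_eq {n : E} (hn : n ≠ 0) :
    {v : E | 0 ≤ ⟪v, n⟫_ℝ} =ᵐ[volume] {v : E | 0 < ⟪v, n⟫_ℝ} := by
  filter_upwards [measure_eq_zero_iff_ae_notMem.mp (volume_setOf_inner_eq_zero hn)] with v hv
  simp only [eq_iff_iff] at hv ⊢
  exact ⟨fun h => h.lt_of_ne' hv, le_of_lt⟩

theorem measurePreserving_specularReflection {n : E} (hn : n ≠ 0) :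
    MeasurePreserving (specularReflection n) (volume.restrict {v : E | 0 < ⟪v, n⟫_ℝ}ᶜ)
      (volume.restrict {v : E | 0 < ⟪v, n⟫_ℝ}) := by
  have hpre : specularReflection n ⁻¹' {v : E | 0 ≤ ⟪v, n⟫_ℝ} = {v : E | 0 < ⟪v, n⟫_ℝ}ᶜ := by
    ext v
    simp [inner_specularReflection]
  rw [← hpre, ← Measure.restrict_congr_set (setOf_inner_nonneg_ae_eq hn)]
  exact (specularReflection n).measurePreserving.restrict_preimage_emb
    (specularReflection n).toMeasurableEquiv.measurableEmbedding _

theorem integrableOn_compl_inner_mul_comp_specularReflection_iff {n : E} (hn : n ≠ 0)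
    (g : E → ℝ) :
    IntegrableOn (fun v => ⟪v, n⟫_ℝ * g (specularReflection n v)) {v : E | 0 < ⟪v, n⟫_ℝ}ᶜ ↔
      IntegrableOn (fun v => ⟪v, n⟫_ℝ * g v) {v : E | 0 < ⟪v, n⟫_ℝ} := by
  rw [IntegrableOn, ← integrable_neg_iff, IntegrableOn,
    ← (measurePreserving_specularReflection hn).integrable_comp_emb
      (specularReflection n).toMeasurableEquiv.measurableEmbedding]
  congr! 1
  ext v
  simp [inner_specularReflection]

theorem integral_compl_inner_mul_comp_specularReflection {n : E} (hn : n ≠ 0) (g : E → ℝ) :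
    ∫ v in {v : E | 0 < ⟪v, n⟫_ℝ}ᶜ, ⟪v, n⟫_ℝ * g (specularReflection n v) =
      -∫ v in {v : E | 0 < ⟪v, n⟫_ℝ}, ⟪v, n⟫_ℝ * g v := by
  rw [← (measurePreserving_specularReflection hn).integral_comp
      (specularReflection n).toMeasurableEquiv.measurableEmbedding, ← integral_neg]
  congr 1 with v
  rw [inner_specularReflection, neg_mul, neg_neg]

end SpecularReflection

local notation "V3" => EuclideanSpace ℝ (Fin 3)

section Maxwellian

open Set ProbabilityTheory

theorem maxwellian_nonneg (v : V3) : 0 ≤ Maxwellian v := by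
  unfold Maxwellian
  positivity

theorem maxwellian_map_linearIsometryEquiv (e : V3 ≃ₗᵢ[ℝ] V3) (v : V3) :
    Maxwellian (e v) = Maxwellian v := by
  simp only [Maxwellian, e.norm_map]

theorem maxwellian_eq_prod (v : V3) : Maxwellian v = ∏ i, gaussianPDFReal 0 1 (v i) := by
  simp only [Maxwellian, gaussianPDFReal, Finset.prod_mul_distrib, ← Real.exp_sum,
    Finset.prod_const, Finset.card_univ, Fintype.card_fin, EuclideanSpace.real_norm_sq_eq]
  congr 1
  · rw [NNReal.coe_one, mul_one, Real.sqrt_eq_rpow, ← Real.rpow_neg (by positivity),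
      ← Real.rpow_natCast, ← Real.rpow_mul (by positivity)]
    norm_num
  · simp [Finset.sum_div, neg_div]

theorem integral_Ioi_mul_gaussianPDFReal :
    ∫ t in Ioi 0, t * gaussianPDFReal 0 1 t = (√(2 * π))⁻¹ := by
  have hexp : ∫ t in Ioi (0 : ℝ), t * rexp (-(1 / 2) * t ^ 2) = 1 := by
    have h := integral_mul_cexp_neg_mul_sq (b := (1 / 2 : ℂ)) (by norm_num)
    apply Complex.ofReal_injective
    rw [← integral_complex_ofReal]
    push_cast
    norm_num at h ⊢
    exact h
  have hpdf (t : ℝ) :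
      t * gaussianPDFReal 0 1 t = (√(2 * π))⁻¹ * (t * rexp (-(1 / 2) * t ^ 2)) := by
    simp only [gaussianPDFReal, NNReal.coe_one, mul_one, sub_zero]
    ring_nf
  simp_rw [hpdf]
  rw [integral_const_mul, hexp, mul_one]

theorem integral_halfSpace_apply_zero_mul_maxwellian :
    ∫ v in {v : V3 | 0 < v 0}, v 0 * Maxwellian v = (√(2 * π))⁻¹ := by
  let φ : Fin 3 → ℝ → ℝ :=
    Fin.cons ((Ioi 0).indicator fun t => t * gaussianPDFReal 0 1 t) fun _ => gaussianPDFReal 0 1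
  have hfactor (y : Fin 3 → ℝ) :
      {v : V3 | 0 < v 0}.indicator (fun v => v 0 * Maxwellian v) (WithLp.toLp 2 y) =
        ∏ i, φ i (y i) := by
    by_cases h : 0 < y 0 <;>
      simp [φ, h, maxwellian_eq_prod, Fin.prod_univ_succ (n := 2), mul_assoc]
  rw [← integral_indicator (measurableSet_lt measurable_const (by fun_prop)),
    ← (PiLp.volume_preserving_toLp (Fin 3)).integral_comp
      (MeasurableEquiv.toLp 2 (Fin 3 → ℝ)).measurableEmbedding]
  simp_rw [hfactor]
  rw [integral_fintype_prod_volume_eq_prod, Fin.prod_univ_succ]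
  simp [φ, integral_indicator measurableSet_Ioi, integral_Ioi_mul_gaussianPDFReal,
    integral_gaussianPDFReal_eq_one]

theorem integral_halfSpace_inner_mul_maxwellian {n : V3} (hn : ‖n‖ = 1) :
    ∫ v in {v : V3 | 0 < ⟪v, n⟫_ℝ}, ⟪v, n⟫_ℝ * Maxwellian v = (√(2 * π))⁻¹ := by
  let e₀ : V3 := EuclideanSpace.single 0 1
  let e : V3 ≃ₗᵢ[ℝ] V3 := (ℝ ∙ (n - e₀))ᗮ.reflection
  have he : e n = e₀ := Submodule.reflection_sub (by simp [hn, e₀])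
  have hinner (v : V3) : ⟪v, n⟫_ℝ = e v 0 := by
    rw [← e.inner_map_map, he, EuclideanSpace.inner_single_right]
    simp
  calc ∫ v in {v : V3 | 0 < ⟪v, n⟫_ℝ}, ⟪v, n⟫_ℝ * Maxwellian v
      = ∫ v in e ⁻¹' {w : V3 | 0 < w 0}, e v 0 * Maxwellian (e v) := by
        simp_rw [hinner, maxwellian_map_linearIsometryEquiv]
        rfl
    _ = ∫ w in {w : V3 | 0 < w 0}, w 0 * Maxwellian w :=
        e.measurePreserving.setIntegral_preimage_emb e.toMeasurableEquiv.measurableEmbedding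
          (fun w : V3 => w 0 * Maxwellian w) {w : V3 | 0 < w 0}
    _ = (√(2 * π))⁻¹ := integral_halfSpace_apply_zero_mul_maxwellian

theorem integrableOn_halfSpace_inner_mul_maxwellian {n : V3} (hn : ‖n‖ = 1) :
    IntegrableOn (fun v => ⟪v, n⟫_ℝ * Maxwellian v) {v : V3 | 0 < ⟪v, n⟫_ℝ} :=
  .of_integral_ne_zero <| by
    rw [integral_halfSpace_inner_mul_maxwellian hn]
    positivity

end Maxwellian

section DiffuseProjection

variable (n : V3) (f : V3 → ℝ)

theorem pgamma_map_linearIsometryEquiv (e : V3 ≃ₗᵢ[ℝ] V3) (v : V3) :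
    Pgamma n f (e v) = Pgamma n f v := by
  simp only [Pgamma, maxwellian_map_linearIsometryEquiv]

noncomputable def diffuseFlux : ℝ :=
  ∫ w in {w : V3 | 0 < ⟪w, n⟫_ℝ}, ⟪w, n⟫_ℝ * f w * √(Maxwellian w)

theorem pgamma_eq_mul_sqrt_maxwellian (v : V3) :
    Pgamma n f v = √(2 * π) * diffuseFlux n f * √(Maxwellian v) := by
  rw [Pgamma, Real.sqrt_mul (by positivity), diffuseFlux]
  ring

theorem inner_mul_mul_pgamma (v : V3) :
    ⟪v, n⟫_ℝ * (f v * Pgamma n f v) =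
      √(2 * π) * diffuseFlux n f * (⟪v, n⟫_ℝ * f v * √(Maxwellian v)) := by
  rw [pgamma_eq_mul_sqrt_maxwellian]
  ring

theorem inner_mul_pgamma_sq (v : V3) :
    ⟪v, n⟫_ℝ * Pgamma n f v ^ 2 = 2 * π * diffuseFlux n f ^ 2 * (⟪v, n⟫_ℝ * Maxwellian v) := by
  rw [pgamma_eq_mul_sqrt_maxwellian, mul_pow, mul_pow, Real.sq_sqrt (by positivity),
    Real.sq_sqrt (maxwellian_nonneg v)]
  ring

theorem integrableOn_inner_mul_mul_pgamma :
    IntegrableOn (fun v => ⟪v, n⟫_ℝ * (f v * Pgamma n f v)) {v : V3 | 0 < ⟪v, n⟫_ℝ} := by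
  simp_rw [inner_mul_mul_pgamma]
  -- `diffuseFlux n f` is the integral of the last factor, hence `0` unless that factor is integrable.
  by_cases hc : diffuseFlux n f = 0
  · simp [hc]
  · exact (Integrable.of_integral_ne_zero hc).const_mul _

variable {n}

theorem integrableOn_inner_mul_pgamma_sq (hn : ‖n‖ = 1) :
    IntegrableOn (fun v => ⟪v, n⟫_ℝ * Pgamma n f v ^ 2) {v : V3 | 0 < ⟪v, n⟫_ℝ} := by
  simp_rw [inner_mul_pgamma_sq]
  exact (integrableOn_halfSpace_inner_mul_maxwellian hn).const_mul _

theorem integral_inner_mul_pgamma_sq_eq (hn : ‖n‖ = 1) :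
    ∫ v in {v : V3 | 0 < ⟪v, n⟫_ℝ}, ⟪v, n⟫_ℝ * Pgamma n f v ^ 2 =
      ∫ v in {v : V3 | 0 < ⟪v, n⟫_ℝ}, ⟪v, n⟫_ℝ * (f v * Pgamma n f v) := by
  simp_rw [inner_mul_pgamma_sq, inner_mul_mul_pgamma]
  rw [integral_const_mul, integral_const_mul, integral_halfSpace_inner_mul_maxwellian hn,
    ← diffuseFlux]
  field_simp
  rw [Real.sq_sqrt (by positivity)]
  ring

end DiffuseProjection

section MaxwellReflection

variable {n : V3} {f : V3 → ℝ}

theorem inner_mul_add_pgamma_sq (a b : ℝ) (v : V3) :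
    ⟪v, n⟫_ℝ * (a * f v + b * Pgamma n f v) ^ 2 =
      a ^ 2 * (⟪v, n⟫_ℝ * f v ^ 2) + 2 * a * b * (⟪v, n⟫_ℝ * (f v * Pgamma n f v)) +
        b ^ 2 * (⟪v, n⟫_ℝ * Pgamma n f v ^ 2) := by
  ring

theorem integrableOn_inner_mul_add_pgamma_sq (hn : ‖n‖ = 1)
    (hf : IntegrableOn (fun v => ⟪v, n⟫_ℝ * f v ^ 2) {v : V3 | 0 < ⟪v, n⟫_ℝ}) (a b : ℝ) :
    IntegrableOn (fun v => ⟪v, n⟫_ℝ * (a * f v + b * Pgamma n f v) ^ 2)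
      {v : V3 | 0 < ⟪v, n⟫_ℝ} := by
  simp_rw [inner_mul_add_pgamma_sq]
  exact ((hf.const_mul _).add ((integrableOn_inner_mul_mul_pgamma n f).const_mul _)).add
    ((integrableOn_inner_mul_pgamma_sq f hn).const_mul _)

theorem integral_inner_mul_add_pgamma_sq (hn : ‖n‖ = 1)
    (hf : IntegrableOn (fun v => ⟪v, n⟫_ℝ * f v ^ 2) {v : V3 | 0 < ⟪v, n⟫_ℝ}) (a b : ℝ) :
    ∫ v in {v : V3 | 0 < ⟪v, n⟫_ℝ}, ⟪v, n⟫_ℝ * (a * f v + b * Pgamma n f v) ^ 2 =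
      a ^ 2 * (∫ v in {v : V3 | 0 < ⟪v, n⟫_ℝ}, ⟪v, n⟫_ℝ * f v ^ 2) +
        (2 * a * b + b ^ 2) * ∫ v in {v : V3 | 0 < ⟪v, n⟫_ℝ}, ⟪v, n⟫_ℝ * Pgamma n f v ^ 2 := by
  simp_rw [inner_mul_add_pgamma_sq]
  rw [integral_add, integral_add, integral_const_mul, integral_const_mul, integral_const_mul,
    ← integral_inner_mul_pgamma_sq_eq f hn]
  · ring
  exacts [hf.const_mul _, (integrableOn_inner_mul_mul_pgamma n f).const_mul _,
    (hf.const_mul _).add ((integrableOn_inner_mul_mul_pgamma n f).const_mul _),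
    (integrableOn_inner_mul_pgamma_sq f hn).const_mul _]

theorem boundaryTrace_of_not_pos (hn : ‖n‖ = 1) (α : ℝ) {v : V3} (hv : ¬0 < ⟪v, n⟫_ℝ) :
    boundaryTrace n α f v =
      (1 - α) * f (specularReflection n v) + α * Pgamma n f (specularReflection n v) := by
  rw [boundaryTrace, if_neg hv, pgamma_map_linearIsometryEquiv, specularReflection_apply hn]

end MaxwellReflection

theorem boundary_dissipation_identity_general (n : EuclideanSpace ℝ (Fin 3)) (hn : ‖n‖ = 1)
    (α : ℝ)
    (f : EuclideanSpace ℝ (Fin 3) → ℝ)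
    (hf : IntegrableOn (fun v => ⟪v, n⟫_ℝ * f v ^ 2)
      {v : EuclideanSpace ℝ (Fin 3) | 0 < ⟪v, n⟫_ℝ}) :
    (1 / 2) * ∫ v, ⟪v, n⟫_ℝ * (boundaryTrace n α f v) ^ 2 =
      ((2 - α) * α / 2) *
        ∫ v in {v : EuclideanSpace ℝ (Fin 3) | 0 < ⟪v, n⟫_ℝ},
          ⟪v, n⟫_ℝ * (f v - Pgamma n f v) ^ 2 := by
  have hn0 : n ≠ 0 := by
    rintro rfl
    simp at hn
  have hS : MeasurableSet {v : EuclideanSpace ℝ (Fin 3) | 0 < ⟪v, n⟫_ℝ} :=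
    measurableSet_lt measurable_const (by fun_prop)
  have hout : Set.EqOn (fun v => ⟪v, n⟫_ℝ * boundaryTrace n α f v ^ 2)
      (fun v => ⟪v, n⟫_ℝ * f v ^ 2) {v | 0 < ⟪v, n⟫_ℝ} := fun v hv => by
    simp only [boundaryTrace, if_pos (show 0 < ⟪v, n⟫_ℝ from hv)]
  set g := fun w => ((1 - α) * f w + α * Pgamma n f w) ^ 2 with hg
  have hin : Set.EqOn (fun v => ⟪v, n⟫_ℝ * boundaryTrace n α f v ^ 2)
      (fun v => ⟪v, n⟫_ℝ * g (specularReflection n v)) {v | 0 < ⟪v, n⟫_ℝ}ᶜ := fun v hv => by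
    simp only [boundaryTrace_of_not_pos hn α hv, hg]
  have hint : Integrable fun v => ⟪v, n⟫_ℝ * boundaryTrace n α f v ^ 2 := by
    rw [← integrableOn_univ, ← Set.union_compl_self {v | 0 < ⟪v, n⟫_ℝ}]
    exact (hf.congr_fun hout.symm hS).union
      (((integrableOn_compl_inner_mul_comp_specularReflection_iff hn0 _).2
        (integrableOn_inner_mul_add_pgamma_sq hn hf _ _)).congr_fun hin.symm hS.compl)
  have hrhs := integral_inner_mul_add_pgamma_sq hn hf 1 (-1)
  simp only [one_mul, neg_one_mul, ← sub_eq_add_neg] at hrhs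
  rw [← integral_add_compl hS hint, setIntegral_congr_fun hS hout,
    setIntegral_congr_fun hS.compl hin, integral_compl_inner_mul_comp_specularReflection hn0 g,
    hg, integral_inner_mul_add_pgamma_sq hn hf, hrhs]
  ring

/-- the boundary dissipation identity for the Maxwell reflection
boundary condition. -/
theorem boundary_dissipation_identity (n : EuclideanSpace ℝ (Fin 3)) (hn : ‖n‖ = 1)
    (α : ℝ) (hα : 0 < α) (hα1 : α ≤ 1)
    (f : EuclideanSpace ℝ (Fin 3) → ℝ)
    (hf : IntegrableOn (fun v => ⟪v, n⟫_ℝ * f v ^ 2)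
      {v : EuclideanSpace ℝ (Fin 3) | 0 < ⟪v, n⟫_ℝ}) :
    (1 / 2) * ∫ v, ⟪v, n⟫_ℝ * (boundaryTrace n α f v) ^ 2 =
      ((2 - α) * α / 2) *
        ∫ v in {v : EuclideanSpace ℝ (Fin 3) | 0 < ⟪v, n⟫_ℝ},
          ⟪v, n⟫_ℝ * (f v - Pgamma n f v) ^ 2 :=
  boundary_dissipation_identity_general n hn α f hf
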